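/- arXiv:2212.07203 — 3 statements merged into one kernel-verified Lean document; each statement's English description precedes it below -/
import Mathlib

section
/- If H(ξ) := a(ξ) + ⟨b(ξ), u_ref(ξ)⟩ with a, b, u_ref locally Lipschitz and b(ξ) ≠ 0 on an open set X, then the map ξ ↦ u*(ξ) defined by u*(ξ) = u_ref(ξ) + ℓ₁(H(ξ))·(−b(ξ)/‖b(ξ)‖²), where ℓ₁(r) = min(r, 0), is locally Lipschitz on X. -/
open RealInnerProductSpace NNReal

set_option linter.unusedSectionVars false

/-- Local Lipschitz continuity of a map on a set: near every point of the set,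
the map is Lipschitz on a neighborhood (within the set). -/
def LocallyLipschitzOnSet {α β : Type*} [PseudoMetricSpace α] [PseudoMetricSpace β]
    (f : α → β) (X : Set α) : Prop :=
  ∀ x ∈ X, ∃ K : ℝ≥0, ∃ s ∈ nhdsWithin x X, LipschitzOnWith K f s

section Aux

variable {α : Type*} [PseudoMetricSpace α] {E : Type*} [NormedAddCommGroup E] [NormedSpace ℝ E]

/-- Lipschitz with a real constant and bounded, on a set. -/
def LipB (f : α → E) (s : Set α) : Prop :=
  ∃ K B : ℝ, 0 ≤ K ∧ 0 ≤ B ∧ (∀ x ∈ s, ‖f x‖ ≤ B) ∧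
    ∀ x ∈ s, ∀ y ∈ s, ‖f x - f y‖ ≤ K * dist x y

lemma LipB.add {f g : α → E} {s : Set α} (hf : LipB f s) (hg : LipB g s) :
    LipB (fun x => f x + g x) s := by
  obtain ⟨K, B, hK, hB, hbd, hl⟩ := hf
  obtain ⟨K', B', hK', hB', hbd', hl'⟩ := hg
  refine ⟨K + K', B + B', by positivity, by positivity, ?_, ?_⟩
  · intro x hx
    exact (norm_add_le _ _).trans (add_le_add (hbd x hx) (hbd' x hx))
  · intro x hx y hy
    have h : f x + g x - (f y + g y) = (f x - f y) + (g x - g y) := by abel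
    rw [h]
    calc ‖(f x - f y) + (g x - g y)‖ ≤ ‖f x - f y‖ + ‖g x - g y‖ := norm_add_le _ _
      _ ≤ K * dist x y + K' * dist x y := add_le_add (hl x hx y hy) (hl' x hx y hy)
      _ = (K + K') * dist x y := by ring

lemma LipB.neg {f : α → E} {s : Set α} (hf : LipB f s) : LipB (fun x => -f x) s := by
  obtain ⟨K, B, hK, hB, hbd, hl⟩ := hf
  refine ⟨K, B, hK, hB, ?_, ?_⟩
  · intro x hx; simpa using hbd x hx
  · intro x hx y hy
    have h : -f x - -f y = -(f x - f y) := by abel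
    rw [h, norm_neg]; exact hl x hx y hy

lemma LipB.smul {f : α → ℝ} {g : α → E} {s : Set α} (hf : LipB f s) (hg : LipB g s) :
    LipB (fun x => f x • g x) s := by
  obtain ⟨K, B, hK, hB, hbd, hl⟩ := hf
  obtain ⟨K', B', hK', hB', hbd', hl'⟩ := hg
  refine ⟨B * K' + K * B', B * B', by positivity, by positivity, ?_, ?_⟩
  · intro x hx
    rw [norm_smul]
    exact mul_le_mul (hbd x hx) (hbd' x hx) (norm_nonneg _) hB
  · intro x hx y hy
    have h : f x • g x - f y • g y = f x • (g x - g y) + (f x - f y) • g y := by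
      rw [smul_sub, sub_smul]; abel
    rw [h]
    calc ‖f x • (g x - g y) + (f x - f y) • g y‖
        ≤ ‖f x • (g x - g y)‖ + ‖(f x - f y) • g y‖ := norm_add_le _ _
      _ = ‖f x‖ * ‖g x - g y‖ + ‖f x - f y‖ * ‖g y‖ := by rw [norm_smul, norm_smul]
      _ ≤ B * (K' * dist x y) + (K * dist x y) * B' := by
          gcongr
          · exact hbd x hx
          · exact hl' x hx y hy
          · exact hl x hx y hy
          · exact hbd' y hy
      _ = (B * K' + K * B') * dist x y := by ring

lemma LipB.min0 {f : α → ℝ} {s : Set α} (hf : LipB f s) :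
    LipB (fun x => min (f x) 0) s := by
  obtain ⟨K, B, hK, hB, hbd, hl⟩ := hf
  refine ⟨K, B, hK, hB, ?_, ?_⟩
  · intro x hx
    have h : |min (f x) 0| ≤ |f x| := by
      rcases le_or_gt (f x) 0 with h | h
      · simp [min_eq_left h]
      · simp [min_eq_right h.le]
    rw [Real.norm_eq_abs]
    exact h.trans ((Real.norm_eq_abs (f x)) ▸ hbd x hx)
  · intro x hx y hy
    rw [Real.norm_eq_abs]
    calc |min (f x) 0 - min (f y) 0| ≤ max |f x - f y| |(0 : ℝ) - 0| :=
          abs_min_sub_min_le_max _ _ _ _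
      _ = |f x - f y| := by simp
      _ = ‖f x - f y‖ := (Real.norm_eq_abs _).symm
      _ ≤ K * dist x y := hl x hx y hy

lemma LipB.inv {f : α → ℝ} {s : Set α} {c : ℝ} (hc : 0 < c)
    (hlb : ∀ x ∈ s, c ≤ f x) (hf : LipB f s) :
    LipB (fun x => (f x)⁻¹) s := by
  obtain ⟨K, B, hK, hB, hbd, hl⟩ := hf
  refine ⟨K / (c * c), c⁻¹, by positivity, by positivity, ?_, ?_⟩
  · intro x hx
    have hx0 : 0 < f x := hc.trans_le (hlb x hx)
    rw [Real.norm_eq_abs, abs_of_pos (inv_pos.2 hx0)]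
    exact inv_anti₀ hc (hlb x hx)
  · intro x hx y hy
    have hx0 : 0 < f x := hc.trans_le (hlb x hx)
    have hy0 : 0 < f y := hc.trans_le (hlb y hy)
    rw [Real.norm_eq_abs, inv_sub_inv hx0.ne' hy0.ne', abs_div, abs_mul,
      abs_of_pos hx0, abs_of_pos hy0]
    rw [div_le_iff₀ (by positivity)]
    have hKeq : K = K / (c * c) * (c * c) := by field_simp
    calc |f y - f x| = ‖f y - f x‖ := (Real.norm_eq_abs _).symm
      _ ≤ K * dist y x := hl y hy x hx
      _ = K / (c * c) * dist x y * (c * c) := by rw [dist_comm y x]; field_simp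
      _ ≤ K / (c * c) * dist x y * (f x * f y) := by
          have h1 : c * c ≤ f x * f y := by nlinarith [hlb x hx, hlb y hy]
          have h2 : 0 ≤ K / (c * c) * dist x y := by positivity
          nlinarith

lemma LipB.inner' {F : Type*} [NormedAddCommGroup F] [InnerProductSpace ℝ F]
    {f g : α → F} {s : Set α} (hf : LipB f s) (hg : LipB g s) :
    LipB (fun x => ⟪f x, g x⟫) s := by
  obtain ⟨K, B, hK, hB, hbd, hl⟩ := hf
  obtain ⟨K', B', hK', hB', hbd', hl'⟩ := hg
  refine ⟨B * K' + K * B', B * B', by positivity, by positivity, ?_, ?_⟩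
  · intro x hx
    rw [Real.norm_eq_abs]
    calc |⟪f x, g x⟫| ≤ ‖f x‖ * ‖g x‖ := abs_real_inner_le_norm _ _
      _ ≤ B * B' := mul_le_mul (hbd x hx) (hbd' x hx) (norm_nonneg _) hB
  · intro x hx y hy
    have h : ⟪f x, g x⟫ - ⟪f y, g y⟫ = ⟪f x, g x - g y⟫ + ⟪f x - f y, g y⟫ := by
      rw [inner_sub_right, inner_sub_left]; ring
    rw [Real.norm_eq_abs, h]
    calc |⟪f x, g x - g y⟫ + ⟪f x - f y, g y⟫|
        ≤ |⟪f x, g x - g y⟫| + |⟪f x - f y, g y⟫| := abs_add_le _ _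
      _ ≤ ‖f x‖ * ‖g x - g y‖ + ‖f x - f y‖ * ‖g y‖ :=
          add_le_add (abs_real_inner_le_norm _ _) (abs_real_inner_le_norm _ _)
      _ ≤ B * (K' * dist x y) + (K * dist x y) * B' := by
          gcongr
          · exact hbd x hx
          · exact hl' x hx y hy
          · exact hl x hx y hy
          · exact hbd' y hy
      _ = (B * K' + K * B') * dist x y := by ring

lemma LipschitzOnWith.lipB {f : α → E} {K : ℝ≥0} {x : α} {r : ℝ} (hr : 0 ≤ r)
    (hf : LipschitzOnWith K f (Metric.closedBall x r)) (hx : x ∈ Metric.closedBall x r) :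
    LipB f (Metric.closedBall x r) := by
  refine ⟨K, ‖f x‖ + K * r, K.coe_nonneg, by positivity, ?_, ?_⟩
  · intro y hy
    have h := hf.dist_le_mul y hy x hx
    rw [dist_eq_norm] at h
    have hdy : dist y x ≤ r := Metric.mem_closedBall.1 hy
    have h2 : ‖f y‖ ≤ ‖f y - f x‖ + ‖f x‖ := by
      calc ‖f y‖ = ‖f y - f x + f x‖ := by rw [sub_add_cancel]
        _ ≤ ‖f y - f x‖ + ‖f x‖ := norm_add_le _ _
    nlinarith [K.coe_nonneg]
  · intro y hy z hz
    have h := hf.dist_le_mul y hy z hz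
    rwa [dist_eq_norm] at h

lemma LipB.lipschitzOnWith {f : α → E} {s : Set α} (hf : LipB f s) :
    ∃ K : ℝ≥0, LipschitzOnWith K f s := by
  obtain ⟨K, B, hK, _, _, hl⟩ := hf
  refine ⟨K.toNNReal, LipschitzOnWith.of_dist_le_mul ?_⟩
  intro x hx y hy
  rw [dist_eq_norm]
  calc ‖f x - f y‖ ≤ K * dist x y := hl x hx y hy
    _ = (K.toNNReal : ℝ) * dist x y := by rw [Real.coe_toNNReal K hK]

end Aux

/-- If H(ξ) = a(ξ) + ⟨b(ξ), u_ref(ξ)⟩ with a, b, u_ref locally Lipschitz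
and b(ξ) ≠ 0 on an open set X, then ξ ↦ u_ref(ξ) + ℓ₁(H(ξ))·(−b(ξ)/‖b(ξ)‖²),
with ℓ₁(r) = min(r,0), is locally Lipschitz on X. -/
theorem stmt_1 {n m : ℕ} (X : Set (EuclideanSpace ℝ (Fin n))) (hX : IsOpen X)
    (a : EuclideanSpace ℝ (Fin n) → ℝ)
    (b uref : EuclideanSpace ℝ (Fin n) → EuclideanSpace ℝ (Fin m))
    (ha : LocallyLipschitzOnSet a X)
    (hb : LocallyLipschitzOnSet b X)
    (huref : LocallyLipschitzOnSet uref X)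
    (hbne : ∀ ξ ∈ X, b ξ ≠ 0)
    (H : EuclideanSpace ℝ (Fin n) → ℝ)
    (hH : ∀ ξ, H ξ = a ξ + ⟪b ξ, uref ξ⟫)
    (ustar : EuclideanSpace ℝ (Fin n) → EuclideanSpace ℝ (Fin m))
    (hustar : ∀ ξ, ustar ξ = uref ξ + (min (H ξ) 0) • (-(‖b ξ‖ ^ 2)⁻¹ • b ξ)) :
    LocallyLipschitzOnSet ustar X := by
  intro x hx
  have hnx : nhdsWithin x X = nhds x := nhdsWithin_eq_nhds.2 (hX.mem_nhds hx)
  obtain ⟨Ka, sa, hsa, hla⟩ := ha x hx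
  obtain ⟨Kb, sb, hsb, hlb⟩ := hb x hx
  obtain ⟨Ku, su, hsu, hlu⟩ := huref x hx
  rw [hnx] at hsa hsb hsu
  have hmem : sa ∩ sb ∩ su ∩ X ∈ nhds x :=
    Filter.inter_mem (Filter.inter_mem (Filter.inter_mem hsa hsb) hsu) (hX.mem_nhds hx)
  obtain ⟨r0, hr0, hball⟩ := Metric.nhds_basis_closedBall.mem_iff.1 hmem
  have hbx : (0 : ℝ) < ‖b x‖ := norm_pos_iff.2 (hbne x hx)
  set r : ℝ := min r0 (‖b x‖ / (2 * (Kb + 1))) with hrdef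
  have hr : 0 < r := lt_min hr0 (by positivity)
  set s : Set (EuclideanSpace ℝ (Fin n)) := Metric.closedBall x r with hsdef
  have hsub : s ⊆ sa ∩ sb ∩ su ∩ X := fun y hy =>
    hball (Metric.closedBall_subset_closedBall (min_le_left _ _) hy)
  have hxs : x ∈ s := Metric.mem_closedBall_self hr.le
  -- LipB facts on s
  have hla' : LipB a s := LipschitzOnWith.lipB hr.le
    (hla.mono fun y hy => ((hsub hy).1.1.1)) hxs
  have hlb' : LipB b s := LipschitzOnWith.lipB hr.le
    (hlb.mono fun y hy => ((hsub hy).1.1.2)) hxs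
  have hlu' : LipB uref s := LipschitzOnWith.lipB hr.le
    (hlu.mono fun y hy => ((hsub hy).1.2)) hxs
  -- lower bound on ‖b y‖ on s
  have hblow : ∀ y ∈ s, ‖b x‖ / 2 ≤ ‖b y‖ := by
    intro y hy
    have hdy : dist y x ≤ r := Metric.mem_closedBall.1 hy
    have hd := (hlb.mono fun z hz => ((hsub hz).1.1.2)).dist_le_mul y hy x hxs
    have h1 : dist (b y) (b x) ≤ Kb * r := by
      calc dist (b y) (b x) ≤ Kb * dist y x := hd
        _ ≤ Kb * r := by nlinarith [Kb.coe_nonneg]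
    have h2 : (Kb : ℝ) * r ≤ ‖b x‖ / 2 := by
      have hrle : r ≤ ‖b x‖ / (2 * (Kb + 1)) := min_le_right _ _
      have hKb1 : (0:ℝ) < Kb + 1 := by positivity
      calc (Kb : ℝ) * r ≤ (Kb + 1) * r := by nlinarith
        _ ≤ (Kb + 1) * (‖b x‖ / (2 * (Kb + 1))) := by nlinarith
        _ = ‖b x‖ / 2 := by field_simp
    have h3 : ‖b x‖ - ‖b y‖ ≤ dist (b y) (b x) := by
      rw [dist_eq_norm]
      calc ‖b x‖ - ‖b y‖ ≤ ‖b x - b y‖ := by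
            have := norm_sub_norm_le (b x) (b y); linarith [le_abs_self (‖b x‖ - ‖b y‖)]
        _ = ‖b y - b x‖ := by rw [norm_sub_rev]
    linarith
  have hc : (0:ℝ) < (‖b x‖/2)^2 := by positivity
  -- LipB of ‖b ·‖^2
  have hq : LipB (fun ξ => ‖b ξ‖ ^ 2) s := by
    have h := LipB.inner' hlb' hlb'
    have he : (fun ξ => (⟪b ξ, b ξ⟫ : ℝ)) = fun ξ => ‖b ξ‖ ^ 2 := by
      funext ξ; rw [real_inner_self_eq_norm_sq]
    rwa [he] at h
  have hqlb : ∀ y ∈ s, (‖b x‖/2)^2 ≤ ‖b y‖ ^ 2 := by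
    intro y hy
    have := hblow y hy
    nlinarith [norm_nonneg (b y), hbx]
  have hinv : LipB (fun ξ => (‖b ξ‖ ^ 2)⁻¹) s := LipB.inv hc hqlb hq
  have hH' : LipB (fun ξ => min (H ξ) 0) s := by
    have hHe : H = fun ξ => a ξ + ⟪b ξ, uref ξ⟫ := funext hH
    rw [hHe]
    exact (hla'.add (LipB.inner' hlb' hlu')).min0
  have hvec : LipB (fun ξ => -(‖b ξ‖ ^ 2)⁻¹ • b ξ) s := hinv.neg.smul hlb'
  have hfinal : LipB (fun ξ => uref ξ + (min (H ξ) 0) • (-(‖b ξ‖ ^ 2)⁻¹ • b ξ)) s :=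
    hlu'.add (hH'.smul hvec)
  have hust : ustar = fun ξ => uref ξ + (min (H ξ) 0) • (-(‖b ξ‖ ^ 2)⁻¹ • b ξ) :=
    funext hustar
  rw [hust]
  obtain ⟨K, hK⟩ := hfinal.lipschitzOnWith
  exact ⟨K, s, nhdsWithin_le_nhds (Metric.closedBall_mem_nhds x hr), hK⟩
end

section
/- Let h : ℝ≥0 → ℝ be absolutely continuous (or C¹) with h(0) > 0, and suppose h′(t) ≥ −α(h(t)) for almost all t, where α : ℝ → ℝ is continuous, strictly increasing, locally Lipschitz, and α(0) = 0. Then h(t) > 0 for all t ≥ 0. -/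
/-!
Let `T` be the first zero of `h`. Near the origin the locally Lipschitz `α` with `α 0 = 0`
satisfies `α y ≤ K |y|`, so just before `T` the inequality becomes `h' ≥ -K h`. Then
`t ↦ h t * exp (K t)` is nondecreasing there, and a positive value of `h` shortly before `T`
cannot drop to `h T = 0`.
-/

open Set Filter Topology Asymptotics

theorem LocallyLipschitz.isBigO_sub {E F : Type*} [SeminormedAddCommGroup E]
    [SeminormedAddCommGroup F] {f : E → F} (hf : LocallyLipschitz f) (x : E) :
    (fun y => f y - f x) =O[𝓝 x] fun y => y - x := by
  obtain ⟨K, t, ht, hK⟩ := hf x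
  refine IsBigO.of_bound K ?_
  filter_upwards [ht] with y hy
  simpa only [dist_eq_norm] using hK.dist_le_mul y hy x (mem_of_mem_nhds ht)

theorem exists_first_zero {f : ℝ → ℝ} (hf : Continuous f) {a b : ℝ} (hab : a ≤ b)
    (ha : 0 < f a) (hb : f b ≤ 0) : ∃ c ∈ Ioc a b, f c = 0 ∧ ∀ t ∈ Ico a c, 0 < f t := by
  obtain ⟨c, ⟨⟨hac, hcb⟩, hc⟩, hleast⟩ :=
    (isCompact_Icc.inter_right (isClosed_le hf continuous_const)).exists_isLeast
      (⟨b, ⟨hab, le_rfl⟩, hb⟩ : (Icc a b ∩ {t | f t ≤ 0}).Nonempty)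
  have hbefore : ∀ t ∈ Ico a c, 0 < f t := fun t ⟨hat, htc⟩ =>
    lt_of_not_ge fun hft => (hleast ⟨⟨hat, htc.le.trans hcb⟩, hft⟩).not_gt htc
  obtain ⟨z, ⟨haz, hzc⟩, hz⟩ := intermediate_value_Icc' hac hf.continuousOn ⟨hc, ha.le⟩
  have hcz : c ≤ z := hleast ⟨⟨haz, hzc.trans hcb⟩, hz.le⟩
  have hca : a ≠ c := by rintro rfl; exact hc.not_gt ha
  exact ⟨c, ⟨lt_of_le_of_ne hac hca, hcb⟩, le_antisymm hzc hcz ▸ hz, hbefore⟩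

theorem monotoneOn_mul_exp_of_neg_mul_le_deriv {f f' : ℝ → ℝ} {K a b : ℝ}
    (hf : ContinuousOn f (Icc a b)) (hf' : ∀ t ∈ Ioo a b, HasDerivAt f (f' t) t)
    (hK : ∀ t ∈ Ioo a b, -(K * f t) ≤ f' t) :
    MonotoneOn (fun t => f t * Real.exp (K * t)) (Icc a b) := by
  have hexp (t : ℝ) : HasDerivAt (fun t => Real.exp (K * t)) (Real.exp (K * t) * K) t := by
    simpa using ((hasDerivAt_id t).const_mul K).exp
  refine monotoneOn_of_hasDerivWithinAt_nonneg (convex_Icc a b)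
    (hf.mul (Real.continuous_exp.comp (continuous_const_mul K)).continuousOn)
    (fun t ht => ((hf' t (by rwa [interior_Icc] at ht)).mul (hexp t)).hasDerivWithinAt) fun t ht => ?_
  rw [interior_Icc] at ht
  have : 0 ≤ Real.exp (K * t) * (f' t + K * f t) :=
    mul_nonneg (Real.exp_pos _).le (by linarith [hK t ht])
  linarith

theorem pos_of_neg_mul_le_deriv {f f' : ℝ → ℝ} {K a b : ℝ} (hab : a ≤ b)
    (hf : ContinuousOn f (Icc a b)) (hf' : ∀ t ∈ Ioo a b, HasDerivAt f (f' t) t)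
    (hK : ∀ t ∈ Ioo a b, -(K * f t) ≤ f' t) (ha : 0 < f a) : 0 < f b := by
  have hmono := monotoneOn_mul_exp_of_neg_mul_le_deriv hf hf' hK
    (left_mem_Icc.2 hab) (right_mem_Icc.2 hab) hab
  have : 0 < f b * Real.exp (K * b) := (mul_pos ha (Real.exp_pos _)).trans_le hmono
  exact pos_of_mul_pos_left this (Real.exp_pos _).le

theorem stmt_3_general (h h' : ℝ → ℝ) (α : ℝ → ℝ)
    (hderiv : ∀ t, HasDerivAt h (h' t) t)
    (h0 : 0 < h 0)
    (hαlip : LocallyLipschitz α) (hα0 : α 0 = 0)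
    (hineq : ∀ t ≥ (0 : ℝ), -α (h t) ≤ h' t) :
    ∀ t ≥ (0 : ℝ), 0 < h t := by
  intro t₀ ht₀
  by_contra! hle
  have hcont : Continuous h := continuous_iff_continuousAt.2 fun t => (hderiv t).continuousAt
  obtain ⟨T, ⟨hT, -⟩, hT0, hpos⟩ := exists_first_zero hcont ht₀ h0 hle
  obtain ⟨K, hK⟩ := ((hαlip.isBigO_sub 0).comp_tendsto (hT0 ▸ hcont.tendsto T)).bound
  obtain ⟨s, ⟨hs, hsT⟩, hsub⟩ := exists_Ioc_subset_of_mem_nhds' hK hT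
  have hlin : ∀ t ∈ Ioo s T, -(K * h t) ≤ h' t := fun t ⟨hst, htT⟩ => by
    have hbound : ‖α (h t) - α 0‖ ≤ K * ‖h t - 0‖ := hsub ⟨hst, htT.le⟩
    have hht := hpos t ⟨hs.trans hst.le, htT⟩
    rw [hα0, sub_zero, sub_zero, Real.norm_of_nonneg hht.le] at hbound
    linarith [le_abs_self (α (h t)), Real.norm_eq_abs (α (h t)), hineq t (hs.trans hst.le)]
  exact (pos_of_neg_mul_le_deriv hsT.le hcont.continuousOn (fun t _ => hderiv t) hlin
    (hpos s ⟨hs, hsT⟩)).ne' hT0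

/-- Comparison lemma for ZCBFs. If h is C¹ with h(0) > 0 and
h′(t) ≥ −α(h(t)) for all t ≥ 0, where α is continuous, strictly increasing,
locally Lipschitz, and α(0) = 0 (extended class-K), then h(t) > 0 for all t ≥ 0. -/
theorem stmt_3 (h h' : ℝ → ℝ) (α : ℝ → ℝ)
    (hderiv : ∀ t, HasDerivAt h (h' t) t)
    (hcont : Continuous h')
    (h0 : 0 < h 0)
    (hαc : Continuous α) (hαmono : StrictMono α)
    (hαlip : LocallyLipschitz α) (hα0 : α 0 = 0)
    (hineq : ∀ t ≥ (0 : ℝ), -α (h t) ≤ h' t) :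
    ∀ t ≥ (0 : ℝ), 0 < h t :=
  stmt_3_general h h' α hderiv h0 hαlip hα0 hineq
end

section
/- For the extended unicycle dynamics with state ξ = (x, y, v, ẋ, ẏ), drift f(ξ) = (ξ₄, ξ₅, 0, 0, 0) and input matrix g(ξ) whose columns are (0,0,1,ξ₄/ξ₃,ξ₅/ξ₃) and (0,0,0,−ξ₅,ξ₄), the barrier function h(ξ) = D(ξ₁,ξ₂)·exp(−(⟨o_r, o_ro⟩ + ξ₃δ)) with δ > 0 satisfies: the row vector L_g h(ξ) equals zero if and only if D(ξ₁,ξ₂) = 0. In particular, h has uniform relative degree 1 on the region where D > 0. -/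
/-- For the extended unicycle dynamics with state ξ = (x,y,v,ẋ,ẏ),
drift f(ξ) = (ξ₄,ξ₅,0,0,0) and input columns g₁(ξ) = (0,0,1,ξ₄/ξ₃,ξ₅/ξ₃),
g₂(ξ) = (0,0,0,−ξ₅,ξ₄), the barrier h(ξ) = D(ξ₁,ξ₂)·exp(−(⟨o_r,o_ro⟩ + ξ₃δ))
with δ > 0 satisfies: L_g h(ξ) = 0 (both components) iff D(ξ₁,ξ₂) = 0.
In particular h has uniform relative degree 1 where D ≠ 0. -/
theorem stmt_5 (D o1 o2 : ℝ → ℝ → ℝ) (δ : ℝ) (hδ : 0 < δ)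
    (hD : ContDiff ℝ (⊤ : ℕ∞) (fun p : ℝ × ℝ => D p.1 p.2))
    (ho1 : ContDiff ℝ (⊤ : ℕ∞) (fun p : ℝ × ℝ => o1 p.1 p.2))
    (ho2 : ContDiff ℝ (⊤ : ℕ∞) (fun p : ℝ × ℝ => o2 p.1 p.2))
    (hunit : ∀ x y, (o1 x y) ^ 2 + (o2 x y) ^ 2 = 1)
    (h : (Fin 5 → ℝ) → ℝ)
    (hdef : ∀ ξ : Fin 5 → ℝ, h ξ =
      D (ξ 0) (ξ 1) *
        Real.exp (-((ξ 3 / ξ 2) * o1 (ξ 0) (ξ 1) + (ξ 4 / ξ 2) * o2 (ξ 0) (ξ 1) + ξ 2 * δ)))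
    (g1 g2 : (Fin 5 → ℝ) → Fin 5 → ℝ)
    (hg1 : ∀ ξ : Fin 5 → ℝ, g1 ξ = ![0, 0, 1, ξ 3 / ξ 2, ξ 4 / ξ 2])
    (hg2 : ∀ ξ : Fin 5 → ℝ, g2 ξ = ![0, 0, 0, -(ξ 4), ξ 3]) :
    ∀ ξ : Fin 5 → ℝ, 0 < ξ 2 → (ξ 3) ^ 2 + (ξ 4) ^ 2 = (ξ 2) ^ 2 →
      ((fderiv ℝ h ξ (g1 ξ) = 0 ∧ fderiv ℝ h ξ (g2 ξ) = 0) ↔ D (ξ 0) (ξ 1) = 0) := by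
  intro ξ hpos hnorm
  have hξ2 : ξ 2 ≠ 0 := ne_of_gt hpos
  have hfun : h = fun ξ : Fin 5 → ℝ => D (ξ 0) (ξ 1) *
      Real.exp (-((ξ 3 / ξ 2) * o1 (ξ 0) (ξ 1) + (ξ 4 / ξ 2) * o2 (ξ 0) (ξ 1) + ξ 2 * δ)) :=
    funext hdef
  subst hfun
  set π : Fin 5 → ((Fin 5 → ℝ) →L[ℝ] ℝ) :=
    fun i => ContinuousLinearMap.proj (R := ℝ) (φ := fun _ : Fin 5 => ℝ) i with hπ
  have hpr : HasFDerivAt (fun ξ : Fin 5 → ℝ => ((ξ 0, ξ 1) : ℝ × ℝ)) ((π 0).prod (π 1)) ξ :=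
    ((π 0).prod (π 1)).hasFDerivAt
  have hAd : HasFDerivAt (fun ξ : Fin 5 → ℝ => D (ξ 0) (ξ 1))
      ((fderiv ℝ (fun p : ℝ × ℝ => D p.1 p.2) (ξ 0, ξ 1)).comp ((π 0).prod (π 1))) ξ :=
    ((hD.differentiable (by simp) _).hasFDerivAt).comp ξ hpr
  have hO1 : HasFDerivAt (fun ξ : Fin 5 → ℝ => o1 (ξ 0) (ξ 1))
      ((fderiv ℝ (fun p : ℝ × ℝ => o1 p.1 p.2) (ξ 0, ξ 1)).comp ((π 0).prod (π 1))) ξ :=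
    ((ho1.differentiable (by simp) _).hasFDerivAt).comp ξ hpr
  have hO2 : HasFDerivAt (fun ξ : Fin 5 → ℝ => o2 (ξ 0) (ξ 1))
      ((fderiv ℝ (fun p : ℝ × ℝ => o2 p.1 p.2) (ξ 0, ξ 1)).comp ((π 0).prod (π 1))) ξ :=
    ((ho2.differentiable (by simp) _).hasFDerivAt).comp ξ hpr
  have hinv : HasFDerivAt (fun ξ : Fin 5 → ℝ => (ξ 2)⁻¹) ((-(ξ 2 ^ 2)⁻¹) • π 2) ξ :=
    (hasDerivAt_inv hξ2).comp_hasFDerivAt ξ (π 2).hasFDerivAt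
  have hq3 := ((π 3).hasFDerivAt.mul hinv)
  have hq4 := ((π 4).hasFDerivAt.mul hinv)
  have hP := ((hq3.mul hO1).add (hq4.mul hO2)).add ((π 2).hasFDerivAt.mul_const δ)
  have hh := hAd.mul hP.neg.exp
  have hh' : HasFDerivAt (fun ξ : Fin 5 → ℝ => D (ξ 0) (ξ 1) *
      Real.exp (-(ξ 3 * (ξ 2)⁻¹ * o1 (ξ 0) (ξ 1) + ξ 4 * (ξ 2)⁻¹ * o2 (ξ 0) (ξ 1) + ξ 2 * δ)))
      (D (ξ 0) (ξ 1) •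
        Real.exp (-(ξ 3 * (ξ 2)⁻¹ * o1 (ξ 0) (ξ 1) + ξ 4 * (ξ 2)⁻¹ * o2 (ξ 0) (ξ 1) + ξ 2 * δ)) •
          -((ξ 3 * (ξ 2)⁻¹) • (fderiv ℝ (fun p : ℝ × ℝ => o1 p.1 p.2) (ξ 0, ξ 1)).comp ((π 0).prod (π 1)) +
                  o1 (ξ 0) (ξ 1) • (ξ 3 • -(ξ 2 ^ 2)⁻¹ • π 2 + (ξ 2)⁻¹ • π 3) +
                ((ξ 4 * (ξ 2)⁻¹) • (fderiv ℝ (fun p : ℝ × ℝ => o2 p.1 p.2) (ξ 0, ξ 1)).comp ((π 0).prod (π 1)) +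
                  o2 (ξ 0) (ξ 1) • (ξ 4 • -(ξ 2 ^ 2)⁻¹ • π 2 + (ξ 2)⁻¹ • π 4)) +
              δ • π 2) +
      Real.exp (-(ξ 3 * (ξ 2)⁻¹ * o1 (ξ 0) (ξ 1) + ξ 4 * (ξ 2)⁻¹ * o2 (ξ 0) (ξ 1) + ξ 2 * δ)) •
        (fderiv ℝ (fun p : ℝ × ℝ => D p.1 p.2) (ξ 0, ξ 1)).comp ((π 0).prod (π 1))) ξ := hh
  simp only [div_eq_mul_inv]
  rw [hh'.fderiv, hg1, hg2]
  have hz : fderiv ℝ (fun p : ℝ × ℝ => D p.1 p.2) (ξ 0, ξ 1) ((0 : ℝ), (0 : ℝ)) = 0 := by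
    have : ((0 : ℝ), (0 : ℝ)) = (0 : ℝ × ℝ) := rfl
    rw [this, map_zero]
  simp only [ContinuousLinearMap.add_apply, ContinuousLinearMap.smul_apply,
    ContinuousLinearMap.comp_apply, ContinuousLinearMap.prod_apply,
    ContinuousLinearMap.proj_apply, ContinuousLinearMap.neg_apply, smul_eq_mul, hπ,
    Matrix.cons_val_zero, Matrix.cons_val_one, Matrix.head_cons, Matrix.cons_val_two,
    Matrix.tail_cons, Matrix.cons_val_three, Matrix.cons_val_four, hz]
  have hz0 : ((0 : ℝ), (0 : ℝ)) = (0 : ℝ × ℝ) := rfl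
  simp only [hz0, map_zero]
  set Dv := D (ξ 0) (ξ 1) with hDv
  set E := Real.exp (-(ξ 3 * (ξ 2)⁻¹ * o1 (ξ 0) (ξ 1) + ξ 4 * (ξ 2)⁻¹ * o2 (ξ 0) (ξ 1) + ξ 2 * δ))
    with hE
  have hEne : E ≠ 0 := Real.exp_ne_zero _
  constructor
  · rintro ⟨h1, -⟩
    have key : Dv * δ * E = 0 := by
      rw [← neg_eq_zero, ← h1]
      field_simp
      ring
    rcases mul_eq_zero.mp key with key | key
    · rcases mul_eq_zero.mp key with key | key
      · exact key
      · exact absurd key (ne_of_gt hδ)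
    · exact absurd key hEne
  · intro hD0
    rw [hD0]
    constructor <;> ring
end
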